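/- Let ℱ be a family of connected graphs and let G be a connected graph with nm_ℱ(G) = t > 0, where nm_ℱ(G) is the largest length of an ℱ-necklace contained in G as a minor. Then any two minor models in G of ℱ-necklaces of length t must intersect (their vertex sets φ(V(N)) and φ'(V(N')) have a common vertex). -/

import Mathlib

/-- `φ` is a minor model of `H` in `G`: branch sets are connected (hence nonempty) and
pairwise disjoint, and every edge of `H` is realized by an edge of `G` between the
corresponding branch sets. -/
def IsMinorModel {V W : Type} (G : SimpleGraph V) (H : SimpleGraph W) (φ : W → Set V) :
    Prop :=
  (∀ w : W, (G.induce (φ w)).Connected) ∧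
  (∀ w₁ w₂ : W, w₁ ≠ w₂ → Disjoint (φ w₁) (φ w₂)) ∧
  (∀ w₁ w₂ : W, H.Adj w₁ w₂ → ∃ x ∈ φ w₁, ∃ y ∈ φ w₂, G.Adj x y)

/-- `H` is a minor of `G`. -/
def IsMinorOf {W V : Type} (H : SimpleGraph W) (G : SimpleGraph V) : Prop :=
  ∃ φ : W → Set V, IsMinorModel G H φ
/-- `G` is an `F`-necklace of length `t` with beads `S 0, …, S (t-1)`: the beads
partition `V(G)`, each bead induces a graph isomorphic to a member of the family `F`,
there is exactly one edge between consecutive beads, and there are no edges between any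
other pair of beads. -/
def IsNecklaceWith {V κ : Type} {β : κ → Type} (F : ∀ i : κ, SimpleGraph (β i))
    (G : SimpleGraph V) (t : ℕ) (S : Fin t → Set V) : Prop :=
  (∀ v : V, ∃ i : Fin t, v ∈ S i) ∧
  (∀ i j : Fin t, i ≠ j → Disjoint (S i) (S j)) ∧
  (∀ i : Fin t, ∃ b : κ, Nonempty ((G.induce (S i)) ≃g F b)) ∧
  (∀ i j : Fin t, (j : ℕ) = (i : ℕ) + 1 →
    ∃! p : V × V, p.1 ∈ S i ∧ p.2 ∈ S j ∧ G.Adj p.1 p.2) ∧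
  (∀ i j : Fin t, (i : ℕ) + 1 < (j : ℕ) →
    ∀ x ∈ S i, ∀ y ∈ S j, ¬ G.Adj x y)

/-- `G` is an `F`-necklace of length `t`. -/
def IsNecklace {V κ : Type} {β : κ → Type} (F : ∀ i : κ, SimpleGraph (β i))
    (G : SimpleGraph V) (t : ℕ) : Prop :=
  ∃ S : Fin t → Set V, IsNecklaceWith F G t S

/-- `G` is a uniform necklace with structure `(H, x, y)` of length `t`, with beads
`S 0, …, S (t-1)`: the beads partition `V(G)`, each bead induces a copy of `H`,
there is exactly one edge between consecutive beads and no edge between non-consecutive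
beads, and the isomorphisms can be chosen so that the unique edge between the `i`-th and
`(i+1)`-st beads joins the image of `x` in bead `i` to the image of `y` in bead `i+1`. -/
def IsUniformNecklaceWith {V W : Type} (H : SimpleGraph W) (x y : W)
    (G : SimpleGraph V) (t : ℕ) (S : Fin t → Set V) : Prop :=
  (∀ v : V, ∃ i : Fin t, v ∈ S i) ∧
  (∀ i j : Fin t, i ≠ j → Disjoint (S i) (S j)) ∧
  (∀ i j : Fin t, (j : ℕ) = (i : ℕ) + 1 →
    ∃! p : V × V, p.1 ∈ S i ∧ p.2 ∈ S j ∧ G.Adj p.1 p.2) ∧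
  (∀ i j : Fin t, (i : ℕ) + 1 < (j : ℕ) →
    ∀ a ∈ S i, ∀ b ∈ S j, ¬ G.Adj a b) ∧
  ∃ f : ∀ i : Fin t, H ≃g (G.induce (S i)),
    ∀ i j : Fin t, (j : ℕ) = (i : ℕ) + 1 →
      G.Adj ((f i) x).val ((f j) y).val
/-- Some `F`-necklace of length `t` is a minor of `G`. -/
def HasNecklaceMinor {V κ : Type} {β : κ → Type} (F : ∀ i : κ, SimpleGraph (β i))
    (G : SimpleGraph V) (t : ℕ) : Prop :=
  ∃ (W : Type) (_ : Fintype W) (N : SimpleGraph W), IsNecklace F N t ∧ IsMinorOf N G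

/-- `nm_F(G)`: the largest length of an `F`-necklace that is a minor of `G`. -/
noncomputable def necklaceMinorNumber {V κ : Type} {β : κ → Type}
    (F : ∀ i : κ, SimpleGraph (β i)) (G : SimpleGraph V) : ℕ :=
  sSup {t | HasNecklaceMinor F G t}

/-!
If two models of length-`t` `F`-necklaces were disjoint, a shortest path of the connected graph
`G` between them meets each model only at its ends; absorbing the path into the branch set of its
first end makes the branch sets of some `w` and `w'` adjacent. In each necklace, the beads on one
side of the bead containing `w` (resp. `w'`), that bead included, number at least `(t + 1) / 2`.
Glued along the edge `w w'`, these two runs of beads form an `F`-necklace of length greater than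
`t` that is a minor of `G`.
-/

namespace SimpleGraph

variable {X Y : Type} {H : SimpleGraph X} {J : SimpleGraph Y}

noncomputable def Embedding.induceImageIso (f : H ↪g J) (s : Set X) :
    J.induce (f '' s) ≃g H.induce s :=
  { (Equiv.Set.image f s f.injective).symm with
    map_rel_iff' := by
      rintro ⟨_, x, hx, rfl⟩ ⟨_, y, hy, rfl⟩
      have hx' : (Equiv.Set.image f s f.injective).symm ⟨f x, x, hx, rfl⟩ = ⟨x, hx⟩ :=
        (Equiv.symm_apply_eq _).2 rfl
      have hy' : (Equiv.Set.image f s f.injective).symm ⟨f y, y, hy, rfl⟩ = ⟨y, hy⟩ :=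
        (Equiv.symm_apply_eq _).2 rfl
      simp [hx', hy'] }

theorem Embedding.existsUnique_adj_image_iff (f : H ↪g J) (s s' : Set X) :
    (∃! p : Y × Y, p.1 ∈ f '' s ∧ p.2 ∈ f '' s' ∧ J.Adj p.1 p.2) ↔
      ∃! p : X × X, p.1 ∈ s ∧ p.2 ∈ s' ∧ H.Adj p.1 p.2 := by
  constructor
  · rintro ⟨⟨_, _⟩, ⟨⟨x, hx, rfl⟩, ⟨y, hy, rfl⟩, hxy⟩, huniq⟩
    refine ⟨(x, y), ⟨hx, hy, f.map_adj_iff.1 hxy⟩, fun q hq => ?_⟩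
    have := huniq (f q.1, f q.2) ⟨Set.mem_image_of_mem f hq.1, Set.mem_image_of_mem f hq.2.1,
      f.map_adj_iff.2 hq.2.2⟩
    simpa [Prod.ext_iff] using this
  · rintro ⟨⟨x, y⟩, ⟨hx, hy, hxy⟩, huniq⟩
    refine ⟨(f x, f y), ⟨Set.mem_image_of_mem f hx, Set.mem_image_of_mem f hy,
      f.map_adj_iff.2 hxy⟩, ?_⟩
    rintro ⟨_, _⟩ ⟨⟨x', hx', rfl⟩, ⟨y', hy', rfl⟩, hxy'⟩
    have := huniq (x', y') ⟨hx', hy', f.map_adj_iff.1 hxy'⟩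
    simp_all [Prod.ext_iff]

theorem Embedding.forall_not_adj_image_iff (f : H ↪g J) (s s' : Set X) :
    (∀ x ∈ f '' s, ∀ y ∈ f '' s', ¬ J.Adj x y) ↔ ∀ x ∈ s, ∀ y ∈ s', ¬ H.Adj x y := by
  simp

section SumSupEdge

variable {V W : Type} (G : SimpleGraph V) (G' : SimpleGraph W) (v : V) (w : W)

@[simp]
theorem sum_sup_edge_adj_inl_inr {x : V} {y : W} :
    ((G ⊕g G') ⊔ edge (.inl v) (.inr w)).Adj (.inl x) (.inr y) ↔ x = v ∧ y = w := by
  simp [edge_adj]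

def Embedding.sumSupEdgeInl : G ↪g (G ⊕g G') ⊔ edge (.inl v) (.inr w) where
  toEmbedding := .inl
  map_rel_iff' := by simp [edge_adj]

def Embedding.sumSupEdgeInr : G' ↪g (G ⊕g G') ⊔ edge (.inl v) (.inr w) where
  toEmbedding := .inr
  map_rel_iff' := by simp [edge_adj]

end SumSupEdge

variable {V : Type} {G : SimpleGraph V} {A B : Set V}

theorem Connected.exists_isPath_meeting_only_at_ends (hG : G.Connected) (hA : A.Nonempty)
    (hB : B.Nonempty) :
    ∃ x ∈ A, ∃ y ∈ B, ∃ p : G.Walk x y, p.IsPath ∧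
      ∀ v ∈ p.support, (v ∈ A → v = x) ∧ (v ∈ B → v = y) := by
  classical
  obtain ⟨x₀, hx₀⟩ := hA
  obtain ⟨y₀, hy₀⟩ := hB
  have hex : ∃ n, ∃ x ∈ A, ∃ y ∈ B, ∃ p : G.Walk x y, p.length = n :=
    ⟨_, x₀, hx₀, y₀, hy₀, (hG.preconnected x₀ y₀).some, rfl⟩
  obtain ⟨x, hx, y, hy, p, hp⟩ := Nat.find_spec hex
  refine ⟨x, hx, y, hy, p.bypass, p.bypass_isPath, fun v hv => ?_⟩
  replace hv := p.support_bypass_subset_support hv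
  have hlen := congrArg Walk.length (p.take_spec hv)
  rw [Walk.length_append] at hlen
  constructor
  · intro hvA
    have := Nat.find_min' hex ⟨v, hvA, y, hy, p.dropUntil v hv, rfl⟩
    exact (Walk.eq_of_length_eq_zero (by omega : (p.takeUntil v hv).length = 0)).symm
  · intro hvB
    have := Nat.find_min' hex ⟨x, hx, v, hvB, p.takeUntil v hv, rfl⟩
    exact Walk.eq_of_length_eq_zero (by omega : (p.dropUntil v hv).length = 0)

theorem Connected.exists_walk_to_neighbor_avoiding (hG : G.Connected) (hA : A.Nonempty)
    (hB : B.Nonempty) (hAB : Disjoint A B) :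
    ∃ x ∈ A, ∃ y ∈ B, ∃ z, G.Adj z y ∧
      ∃ q : G.Walk x z, ∀ v ∈ q.support, v ∉ B ∧ (v ∈ A → v = x) := by
  obtain ⟨x, hx, y, hy, p, hpath, hends⟩ := hG.exists_isPath_meeting_only_at_ends hA hB
  have hnil : ¬ p.Nil := fun hn => hAB.ne_of_mem hx hy hn.eq
  have hp := p.concat_dropLast (p.adj_penultimate hnil)
  refine ⟨x, hx, y, hy, _, p.adj_penultimate hnil, p.dropLast, fun v hv => ?_⟩
  have hvp : v ∈ p.support := hp ▸ Walk.support_subset_support_concat _ _ hv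
  refine ⟨fun hvB => ?_, (hends v hvp).1⟩
  obtain rfl := (hends v hvp).2 hvB
  rw [← hp] at hpath
  exact ((Walk.concat_isPath_iff _).1 hpath).2 hv

end SimpleGraph

namespace IsMinorModel

open SimpleGraph

variable {V W W₁ W₂ : Type} {G : SimpleGraph V} {H : SimpleGraph W} {φ : W → Set V}

theorem nonempty (h : IsMinorModel G H φ) (w : W) : (φ w).Nonempty :=
  Set.nonempty_coe_sort.1 (h.1 w).nonempty

theorem finite [Finite V] (h : IsMinorModel G H φ) : Finite W :=
  Finite.of_injective (fun w => (h.nonempty w).some) fun w₁ w₂ hw => by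
    by_contra hne
    exact (h.2.1 w₁ w₂ hne).ne_of_mem (h.nonempty w₁).some_mem (h.nonempty w₂).some_mem hw

theorem induce (h : IsMinorModel G H φ) (U : Set W) :
    IsMinorModel G (H.induce U) (fun u => φ u) :=
  ⟨fun u => h.1 u, fun _ _ hne => h.2.1 _ _ (Subtype.val_injective.ne hne),
    fun _ _ hadj => h.2.2 _ _ hadj⟩

theorem update_union [DecidableEq W] (h : IsMinorModel G H φ) {w : W} {K : Set V}
    (hK : ∀ u ≠ w, Disjoint K (φ u)) (hconn : (G.induce (φ w ∪ K)).Connected) :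
    IsMinorModel G H (Function.update φ w (φ w ∪ K)) := by
  have hsub : ∀ u, φ u ⊆ Function.update φ w (φ w ∪ K) u := fun u => by
    rcases eq_or_ne u w with rfl | hu <;> simp [*]
  refine ⟨fun u => ?_, fun u₁ u₂ hne => ?_, fun u₁ u₂ hadj => ?_⟩
  · rcases eq_or_ne u w with rfl | hu
    · rwa [Function.update_self]
    · rw [Function.update_of_ne hu]
      exact h.1 u
  · rcases eq_or_ne u₁ w with rfl | hu₁
    · simpa [hne.symm] using (h.2.1 _ _ hne).union_left (hK u₂ hne.symm)
    · rcases eq_or_ne u₂ w with rfl | hu₂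
      · simpa [hne] using (h.2.1 _ _ hne).union_right (hK u₁ hne).symm
      · simpa [hu₁, hu₂] using h.2.1 _ _ hne
  · obtain ⟨x, hx, y, hy, hxy⟩ := h.2.2 _ _ hadj
    exact ⟨x, hsub u₁ hx, y, hsub u₂ hy, hxy⟩

variable {H₁ : SimpleGraph W₁} {H₂ : SimpleGraph W₂} {ψ₁ : W₁ → Set V} {ψ₂ : W₂ → Set V}

theorem sum_sup_edge (h₁ : IsMinorModel G H₁ ψ₁) (h₂ : IsMinorModel G H₂ ψ₂)
    (hd : ∀ u v, Disjoint (ψ₁ u) (ψ₂ v)) {w₁ : W₁} {w₂ : W₂}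
    (hadj : ∃ x ∈ ψ₁ w₁, ∃ y ∈ ψ₂ w₂, G.Adj x y) :
    IsMinorModel G ((H₁ ⊕g H₂) ⊔ edge (.inl w₁) (.inr w₂)) (Sum.elim ψ₁ ψ₂) := by
  have hcross : ∀ u v, ((H₁ ⊕g H₂) ⊔ edge (.inl w₁) (.inr w₂)).Adj (.inl u) (.inr v) →
      ∃ x ∈ ψ₁ u, ∃ y ∈ ψ₂ v, G.Adj x y := by
    intro u v huv
    obtain ⟨rfl, rfl⟩ := (sum_sup_edge_adj_inl_inr ..).1 huv
    exact hadj
  refine ⟨Sum.rec h₁.1 h₂.1, ?_, ?_⟩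
  · rintro (u₁ | u₁) (u₂ | u₂) hne
    · exact h₁.2.1 _ _ (fun h => hne (congrArg _ h))
    · exact hd _ _
    · exact (hd _ _).symm
    · exact h₂.2.1 _ _ (fun h => hne (congrArg _ h))
  · rintro (u₁ | u₁) (u₂ | u₂) huv
    · exact h₁.2.2 _ _ (by simpa [edge_adj] using huv)
    · exact hcross _ _ huv
    · obtain ⟨x, hx, y, hy, hxy⟩ := hcross _ _ huv.symm
      exact ⟨y, hy, x, hx, hxy.symm⟩
    · exact h₂.2.2 _ _ (by simpa [edge_adj] using huv)

theorem exists_enlarged_adj {W' : Type} {H' : SimpleGraph W'} {φ' : W' → Set V}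
    [Nonempty W] [Nonempty W'] (hG : G.Connected) (hm : IsMinorModel G H φ)
    (hm' : IsMinorModel G H' φ') (hd : Disjoint (⋃ w, φ w) (⋃ w, φ' w)) :
    ∃ (ψ : W → Set V) (w : W) (w' : W'), IsMinorModel G H ψ ∧
      (∀ u v, Disjoint (ψ u) (φ' v)) ∧ ∃ x ∈ ψ w, ∃ y ∈ φ' w', G.Adj x y := by
  classical
  obtain ⟨x, hx, y, hy, z, hzy, q, hq⟩ := hG.exists_walk_to_neighbor_avoiding
    (Set.nonempty_iUnion.2 ⟨Classical.arbitrary W, hm.nonempty _⟩)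
    (Set.nonempty_iUnion.2 ⟨Classical.arbitrary W', hm'.nonempty _⟩) hd
  obtain ⟨w, hxw⟩ := Set.mem_iUnion.1 hx
  obtain ⟨w', hyw'⟩ := Set.mem_iUnion.1 hy
  set K := {v | v ∈ q.support}
  have hKφ : ∀ u ≠ w, Disjoint K (φ u) := fun u hu => Set.disjoint_left.2 fun v hvK hvu => by
    obtain rfl := (hq v hvK).2 (Set.mem_iUnion.2 ⟨u, hvu⟩)
    exact (hm.2.1 u w hu).ne_of_mem hvu hxw rfl
  have hKφ' : Disjoint K (⋃ w, φ' w) := Set.disjoint_left.2 fun v hvK => (hq v hvK).1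
  have hconn : (G.induce (φ w ∪ K)).Connected :=
    induce_union_connected (hm.1 w).preconnected
      q.connected_induce_support.preconnected ⟨x, hxw, q.start_mem_support⟩
  have hsub : ∀ u, Function.update φ w (φ w ∪ K) u ⊆ φ u ∪ K := fun u => by
    rcases eq_or_ne u w with rfl | hu <;> simp [*]
  refine ⟨_, w, w', hm.update_union hKφ hconn, fun u v => ?_,
    z, by simp [K, q.end_mem_support], y, hyw', hzy⟩
  exact (((hd.mono_left (Set.subset_iUnion φ u)).union_left hKφ').mono_right
    (Set.subset_iUnion φ' v)).mono_left (hsub u)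

end IsMinorModel

namespace IsNecklaceWith

section

variable {V κ : Type} {β : κ → Type} {F : ∀ i : κ, SimpleGraph (β i)}
  {N : SimpleGraph V} {t : ℕ} {S : Fin t → Set V}

theorem eq_of_mem (h : IsNecklaceWith F N t S) {v : V} {i j : Fin t} (hi : v ∈ S i)
    (hj : v ∈ S j) : i = j := by
  by_contra hij
  exact (h.2.1 i j hij).ne_of_mem hi hj rfl

theorem nonempty (h : IsNecklaceWith F N t S) (hF : ∀ b, (F b).Connected) (ht : 0 < t) :
    Nonempty V := by
  obtain ⟨b, ⟨e⟩⟩ := h.2.2.1 ⟨0, ht⟩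
  exact ⟨(e.symm (hF b).nonempty.some).val⟩

theorem rev (h : IsNecklaceWith F N t S) : IsNecklaceWith F N t (fun k => S k.rev) := by
  obtain ⟨hcover, hdisj, hbead, hnext, hfar⟩ := h
  refine ⟨fun v => ?_, fun i j hij => hdisj _ _ (Fin.rev_injective.ne hij), fun i => hbead i.rev,
    fun i j hij => ?_, fun i j hij x hx y hy hxy => ?_⟩
  · obtain ⟨i, hi⟩ := hcover v
    exact ⟨i.rev, by simpa using hi⟩
  · obtain ⟨p, ⟨hp₁, hp₂, hp⟩, huniq⟩ := hnext j.rev i.rev (by simp only [Fin.val_rev]; omega)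
    refine ⟨p.swap, ⟨hp₂, hp₁, hp.symm⟩, fun q hq => ?_⟩
    rw [← Prod.swap_swap q, huniq q.swap ⟨hq.2.1, hq.1, hq.2.2.symm⟩]
  · exact hfar j.rev i.rev (by simp only [Fin.val_rev]; omega) y hy x hx hxy.symm

theorem exists_prefix_ending_at (h : IsNecklaceWith F N t S) {v : V} {i : Fin t}
    (hv : v ∈ S i) :
    ∃ (U : Set V) (T : Fin (i + 1) → Set U) (hvU : v ∈ U),
      IsNecklaceWith F (N.induce U) (i + 1) T ∧ ⟨v, hvU⟩ ∈ T (Fin.last i) := by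
  obtain ⟨_, hdisj, hbead, hnext, hfar⟩ := h
  set U := ⋃ k : Fin (i + 1), S (Fin.castLE i.isLt k)
  let f : N.induce U ↪g N := SimpleGraph.Embedding.induce U
  have himg : ∀ k, f '' (Subtype.val ⁻¹' S (Fin.castLE i.isLt k)) = S (Fin.castLE i.isLt k) :=
    fun k => by
      change Subtype.val '' _ = _
      rw [Subtype.image_preimage_coe]
      exact Set.inter_eq_right.2 (Set.subset_iUnion (fun k => S (Fin.castLE i.isLt k)) k)
  have hlast : Fin.castLE i.isLt (Fin.last i) = i := Fin.ext rfl
  refine ⟨U, fun k => Subtype.val ⁻¹' S (Fin.castLE i.isLt k),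
    Set.mem_iUnion.2 ⟨Fin.last i, hlast ▸ hv⟩, ⟨?_, fun k l hkl => ?_, fun k => ?_,
      fun k l hkl => ?_, fun k l hkl => ?_⟩, by simpa [hlast]⟩
  · rintro ⟨v, hv⟩
    obtain ⟨k, hk⟩ := Set.mem_iUnion.1 hv
    exact ⟨k, hk⟩
  · exact (hdisj _ _ ((Fin.castLE_injective _).ne hkl)).preimage _
  · obtain ⟨b, ⟨e⟩⟩ := hbead (Fin.castLE i.isLt k)
    rw [← himg k] at e
    exact ⟨b, ⟨(f.induceImageIso _).symm.trans e⟩⟩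
  · rw [← f.existsUnique_adj_image_iff, himg, himg]
    exact hnext _ _ hkl
  · rw [← f.forall_not_adj_image_iff, himg, himg]
    exact hfar _ _ hkl

theorem exists_half_ending_at (h : IsNecklaceWith F N t S) {v : V} {i : Fin t}
    (hv : v ∈ S i) :
    ∃ a, t ≤ 2 * a + 1 ∧ ∃ (U : Set V) (T : Fin (a + 1) → Set U) (hvU : v ∈ U),
      IsNecklaceWith F (N.induce U) (a + 1) T ∧ ⟨v, hvU⟩ ∈ T (Fin.last a) := by
  by_cases hi : t ≤ 2 * i + 1
  · exact ⟨i, hi, h.exists_prefix_ending_at hv⟩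
  · refine ⟨i.rev, by simp only [Fin.val_rev]; omega, h.rev.exists_prefix_ending_at ?_⟩
    rwa [Fin.rev_rev]

theorem exists_half_starting_at (h : IsNecklaceWith F N t S) {v : V} {i : Fin t}
    (hv : v ∈ S i) :
    ∃ a, t ≤ 2 * a + 1 ∧ ∃ (U : Set V) (T : Fin (a + 1) → Set U) (hvU : v ∈ U),
      IsNecklaceWith F (N.induce U) (a + 1) T ∧ ⟨v, hvU⟩ ∈ T 0 := by
  obtain ⟨a, ha, U, T, hvU, hT, hvT⟩ := h.exists_half_ending_at hv
  exact ⟨a, ha, U, fun k => T k.rev, hvU, hT.rev, by simpa using hvT⟩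

end

section Append

open SimpleGraph

variable {W₁ W₂ κ : Type} {β : κ → Type} {F : ∀ i : κ, SimpleGraph (β i)}
  {N₁ : SimpleGraph W₁} {N₂ : SimpleGraph W₂} {a b : ℕ} {S₁ : Fin (a + 1) → Set W₁}
  {S₂ : Fin (b + 1) → Set W₂} {w₁ : W₁} {w₂ : W₂}

theorem append (h₁ : IsNecklaceWith F N₁ (a + 1) S₁) (h₂ : IsNecklaceWith F N₂ (b + 1) S₂)
    (hw₁ : w₁ ∈ S₁ (Fin.last a)) (hw₂ : w₂ ∈ S₂ 0) :
    IsNecklaceWith F ((N₁ ⊕g N₂) ⊔ edge (.inl w₁) (.inr w₂)) (a + 1 + (b + 1))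
      (Fin.append (fun i => Sum.inl '' S₁ i) (fun j => Sum.inr '' S₂ j)) := by
  let f₁ := Embedding.sumSupEdgeInl N₁ N₂ w₁ w₂
  let f₂ := Embedding.sumSupEdgeInr N₁ N₂ w₁ w₂
  refine ⟨?_, fun i j hij => ?_, fun i => ?_, fun i j hij => ?_, fun i j hij => ?_⟩
  · rintro (v | v)
    · obtain ⟨i, hi⟩ := h₁.1 v
      exact ⟨Fin.castAdd _ i, by simpa using hi⟩
    · obtain ⟨i, hi⟩ := h₂.1 v
      exact ⟨Fin.natAdd _ i, by simpa using hi⟩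
  · induction i using Fin.addCases with
    | left i => induction j using Fin.addCases with
      | left j =>
        simpa [Set.disjoint_image_iff Sum.inl_injective] using h₁.2.1 i j (by simpa using hij)
      | right j => simp
    | right i => induction j using Fin.addCases with
      | left j => simp [disjoint_comm]
      | right j =>
        simpa [Set.disjoint_image_iff Sum.inr_injective] using h₂.2.1 i j (by simpa using hij)
  · induction i using Fin.addCases with
    | left i =>
      obtain ⟨c, ⟨e⟩⟩ := h₁.2.2.1 i
      rw [Fin.append_left]
      exact ⟨c, ⟨(f₁.induceImageIso _).trans e⟩⟩
    | right i =>
      obtain ⟨c, ⟨e⟩⟩ := h₂.2.2.1 i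
      rw [Fin.append_right]
      exact ⟨c, ⟨(f₂.induceImageIso _).trans e⟩⟩
  · induction i using Fin.addCases with
    | left i => induction j using Fin.addCases with
      | left j =>
        rw [Fin.append_left, Fin.append_left]
        exact (f₁.existsUnique_adj_image_iff _ _).2 (h₁.2.2.2.1 i j (by simpa using hij))
      | right j =>
        obtain ⟨rfl, rfl⟩ : i = Fin.last a ∧ j = 0 := by
          simp only [Fin.val_natAdd, Fin.val_castAdd] at hij
          simp only [Fin.ext_iff, Fin.val_last, Fin.val_zero]
          omega
        rw [Fin.append_left, Fin.append_right]
        refine ⟨(.inl w₁, .inr w₂), ⟨Set.mem_image_of_mem _ hw₁, Set.mem_image_of_mem _ hw₂,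
          by simp [edge_adj]⟩, ?_⟩
        rintro ⟨_, _⟩ ⟨⟨x, -, rfl⟩, ⟨y, -, rfl⟩, hxy⟩
        obtain ⟨rfl, rfl⟩ := (sum_sup_edge_adj_inl_inr ..).1 hxy
        rfl
    | right i => induction j using Fin.addCases with
      | left j => simp at hij; omega
      | right j =>
        rw [Fin.append_right, Fin.append_right]
        exact (f₂.existsUnique_adj_image_iff _ _).2
          (h₂.2.2.2.1 i j (by simp only [Fin.val_natAdd] at hij; omega))
  · induction i using Fin.addCases with
    | left i => induction j using Fin.addCases with
      | left j =>
        rw [Fin.append_left, Fin.append_left]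
        exact (f₁.forall_not_adj_image_iff _ _).2 (h₁.2.2.2.2 i j (by simpa using hij))
      | right j =>
        rw [Fin.append_left, Fin.append_right]
        rintro _ ⟨x, hx, rfl⟩ _ ⟨y, hy, rfl⟩ hxy
        obtain ⟨rfl, rfl⟩ := (sum_sup_edge_adj_inl_inr ..).1 hxy
        obtain rfl := h₁.eq_of_mem hx hw₁
        obtain rfl := h₂.eq_of_mem hy hw₂
        simp at hij
    | right i => induction j using Fin.addCases with
      | left j => simp at hij; omega
      | right j =>
        rw [Fin.append_right, Fin.append_right]
        exact (f₂.forall_not_adj_image_iff _ _).2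
          (h₂.2.2.2.2 i j (by simp only [Fin.val_natAdd] at hij; omega))

end Append

end IsNecklaceWith

variable {V κ : Type} {β : κ → Type} {F : ∀ i : κ, SimpleGraph (β i)} {G : SimpleGraph V}

theorem exists_longer_necklaceMinor_of_disjoint [Finite V] {W W' : Type}
    {N : SimpleGraph W} {N' : SimpleGraph W'} {φ : W → Set V} {φ' : W' → Set V} {t : ℕ}
    (hF : ∀ b, (F b).Connected) (hG : G.Connected) (ht : 0 < t) (hN : IsNecklace F N t)
    (hN' : IsNecklace F N' t) (hm : IsMinorModel G N φ) (hm' : IsMinorModel G N' φ')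
    (hd : Disjoint (⋃ w, φ w) (⋃ w, φ' w)) :
    ∃ s, t < s ∧ HasNecklaceMinor F G s := by
  obtain ⟨S, hS⟩ := hN
  obtain ⟨S', hS'⟩ := hN'
  have := hS.nonempty hF ht
  have := hS'.nonempty hF ht
  have := hm.finite
  have := hm'.finite
  obtain ⟨ψ, w, w', hψ, hψφ', hadj⟩ := hm.exists_enlarged_adj hG hm' hd
  obtain ⟨a, ha, U, T, hwU, hT, hwT⟩ := hS.exists_half_ending_at (hS.1 w).choose_spec
  obtain ⟨b, hb, U', T', hwU', hT', hwT'⟩ := hS'.exists_half_starting_at (hS'.1 w').choose_spec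
  exact ⟨a + 1 + (b + 1), by omega, U ⊕ U', Fintype.ofFinite _, _, ⟨_, hT.append hT' hwT hwT'⟩,
    _, (hψ.induce U).sum_sup_edge (hm'.induce U') (fun u v => hψφ' u v) hadj⟩

theorem le_necklaceMinorNumber {s : ℕ} (h : HasNecklaceMinor F G s)
    (hpos : 0 < necklaceMinorNumber F G) : s ≤ necklaceMinorNumber F G := by
  refine le_csSup ?_ h
  -- an unbounded set of naturals has `sSup` equal to `0`
  by_contra hbdd
  rw [necklaceMinorNumber, Nat.sSup_of_not_bddAbove hbdd] at hpos
  exact hpos.false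

theorem stmt16 (V κ : Type) [Fintype V] (β : κ → Type)
    (F : ∀ i : κ, SimpleGraph (β i)) (hFconn : ∀ i, (F i).Connected)
    (G : SimpleGraph V) (hG : G.Connected) (t : ℕ) (ht : 0 < t)
    (hnm : necklaceMinorNumber F G = t) :
    ∀ (W : Type) (N : SimpleGraph W), IsNecklace F N t →
    ∀ (W' : Type) (N' : SimpleGraph W'), IsNecklace F N' t →
    ∀ (φ : W → Set V) (φ' : W' → Set V),
      IsMinorModel G N φ → IsMinorModel G N' φ' →
      ((⋃ w : W, φ w) ∩ (⋃ w : W', φ' w)).Nonempty := by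
  intro W N hN W' N' hN' φ φ' hm hm'
  by_contra hempty
  obtain ⟨s, hts, hs⟩ := exists_longer_necklaceMinor_of_disjoint hFconn hG ht hN hN' hm hm'
    (Set.disjoint_iff_inter_eq_empty.2 (Set.not_nonempty_iff_eq_empty.1 hempty))
  have := le_necklaceMinorNumber hs (hnm ▸ ht)
  omega
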